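/- arXiv:0904.2257 — 3 statements merged into one kernel-verified Lean document; each statement's English description precedes it below -/
import Mathlib

section
/- Let X be an alphabet having n ≥ 2 letters and let g: X* → X* be a primitive morphism. Then for every letter x ∈ X, |g^n(x)| ≥ M_g. -/
open Filter Set

variable {X : Type*}

/-- Apply the morphism with letter images `g` to a word. -/
def applyM (g : X → List X) (w : List X) : List X := w.flatMap g

/-- `iterM g k w` is `g^k(w)`. -/
def iterM (g : X → List X) (k : ℕ) (w : List X) : List X := (applyM g)^[k] w

/-- The letter map of the composition `g ∘ h` (first `h`, then `g`). -/
def compM (g h : X → List X) : X → List X := fun a => applyM g (h a)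

/-- The letter map of the power `g^k`. -/
def powM (g : X → List X) (k : ℕ) : X → List X := fun a => iterM g k [a]

/-- A morphism is primitive if some power maps every letter to a word containing every letter. -/
def Primitive (g : X → List X) : Prop := ∃ k : ℕ, 0 < k ∧ ∀ a b : X, a ∈ iterM g k [b]

/-- `Mg g` is the maximal length of the image of a letter. -/
def Mg [Fintype X] (g : X → List X) : ℕ := Finset.univ.sup fun x => (g x).length

/-- A morphism is growing if the lengths of iterated images of every letter tend to infinity. -/
def Growing (g : X → List X) : Prop :=
  ∀ x : X, Tendsto (fun i => (iterM g i [x]).length) atTop atTop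

/-- `w` is a (finite) prefix of the infinite word `s`. -/
def IsPrefI (w : List X) (s : ℕ → X) : Prop := ∀ i (h : i < w.length), w[i]'h = s i

/-- `v` is a factor of the infinite word `s`. -/
def IsFactorI (v : List X) (s : ℕ → X) : Prop :=
  ∃ j : ℕ, ∀ i (h : i < v.length), v[i]'h = s (j + i)

/-- `g^ω(x)` exists. -/
def OmegaExists (g : X → List X) (x : X) : Prop :=
  [x] <+: g x ∧ Tendsto (fun i => (iterM g i [x]).length) atTop atTop

/-- `s = g^ω(x)`. -/
def IsOmega (g : X → List X) (x : X) (s : ℕ → X) : Prop :=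
  OmegaExists g x ∧ ∀ i : ℕ, IsPrefI (iterM g i [x]) s

/-- `s = u^ω` for the nonempty word `u`. -/
def IsPeriodicWord (s : ℕ → X) (u : List X) : Prop :=
  u ≠ [] ∧ ∀ (i : ℕ) (h : i % u.length < u.length), s i = u[i % u.length]'h

/-- A morphism is looping. -/
def Looping (g : X → List X) : Prop :=
  ∃ k : ℕ, 0 < k ∧ ∃ x : X, ∃ u : List X, ∃ s : ℕ → X,
    IsOmega (powM g k) x s ∧ IsPeriodicWord s u

/-- A morphism is loop-free if it is not looping. -/
def LoopFree (g : X → List X) : Prop := ¬ Looping g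

/-- `p` is a period of `u`. -/
def HasPeriod (u : List X) (p : ℕ) : Prop :=
  0 < p ∧ ∀ i : ℕ, i + p < u.length → u[i + p]? = u[i]?

/-- The smallest period of `u`. -/
noncomputable def PER (u : List X) : ℕ := sInf {p | HasPeriod u p}

/-- A primitive word: nonempty and not a proper power of a shorter word. -/
def PrimitiveWord (u : List X) : Prop :=
  u ≠ [] ∧ ¬∃ (v : List X) (j : ℕ), 2 ≤ j ∧ v.length < u.length ∧
    u = (List.replicate j v).flatten

/-- `COMP g h` : the set of words whose images under `g` and `h` are prefix-comparable. -/
def COMP (g h : X → List X) : Set (List X) :=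
  {w | ∃ u₁ u₂ : List X, applyM g w ++ u₁ = applyM h w ++ u₂}

/-- `BAL g h`. -/
noncomputable def BAL (g h : X → List X) : ℕ∞ :=
  ⨆ (x : X) (k : ℕ),
    ((((applyM g (iterM g k [x])).length : ℤ) -
      ((applyM h (iterM g k [x])).length : ℤ)).natAbs : ℕ∞)

/-- The set of factors of length `q` of the word `w`. -/
def Fq (q : ℕ) (w : List X) : Set (List X) := {v | v.length = q ∧ v <:+: w}

/-- The set of factors of length `q` of words of `L`. -/
def FqL (q : ℕ) (L : Set (List X)) : Set (List X) := ⋃ w ∈ L, Fq q w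

/-- `A n = ⌊9 n³ √(n log n)⌋`. -/
noncomputable def Abound (n : ℕ) : ℕ := ⌊9 * (n : ℝ)^3 * Real.sqrt (n * Real.log n)⌋₊

/-!
Every letter `y` occurs in `g^k(x)` for some `k`, and by pigeonhole on the chain of letters
leading from `x` to `y` already for some `m < n`. Then `g(y)` is a factor of `g^(m+1)(x)`, and
since a primitive morphism is non-erasing, `|g^(m+1)(x)| ≤ |g^n(x)|`.
-/

section Iteration

variable (g : X → List X)

lemma iterM_succ' (m : ℕ) (w : List X) : iterM g (m + 1) w = applyM g (iterM g m w) :=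
  Function.iterate_succ_apply' _ _ _

lemma iterM_add (i j : ℕ) (w : List X) : iterM g (i + j) w = iterM g i (iterM g j w) :=
  Function.iterate_add_apply _ _ _ _

lemma iterM_eq_flatMap (m : ℕ) (w : List X) :
    iterM g m w = w.flatMap fun b => iterM g m [b] := by
  induction m generalizing w with
  | zero => simp [iterM]
  | succ m ih =>
    rw [iterM_succ', ih, applyM, List.flatMap_assoc]
    congr 1
    funext b
    rw [iterM_succ']
    rfl

lemma iterM_nil (m : ℕ) : iterM g m [] = [] := by
  rw [iterM_eq_flatMap, List.flatMap_nil]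

lemma mem_iterM_add {i j : ℕ} {x c : X} :
    c ∈ iterM g (i + j) [x] ↔ ∃ b ∈ iterM g j [x], c ∈ iterM g i [b] := by
  rw [iterM_add, iterM_eq_flatMap, List.mem_flatMap]

lemma length_le_length_applyM_of_mem {b : X} {w : List X} (hb : b ∈ w) :
    (g b).length ≤ (applyM g w).length :=
  (List.sublist_flatten_of_mem (List.mem_map_of_mem hb)).length_le

lemma length_le_length_applyM (hg : ∀ a, g a ≠ []) (w : List X) :
    w.length ≤ (applyM g w).length := by
  induction w with
  | nil => simp [applyM]
  | cons a w ih =>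
    simp only [applyM, List.flatMap_cons, List.length_append, List.length_cons] at ih ⊢
    have := List.length_pos_iff.mpr (hg a)
    omega

lemma monotone_length_iterM (hg : ∀ a, g a ≠ []) (w : List X) :
    Monotone fun m => (iterM g m w).length :=
  monotone_nat_of_le_succ fun m => by
    rw [iterM_succ']
    exact length_le_length_applyM g hg _

lemma Primitive.ne_nil {g : X → List X} (hg : Primitive g) (a : X) : g a ≠ [] := by
  obtain ⟨k, hk, hall⟩ := hg
  intro ha
  have haa := hall a a
  have h1 : iterM g 1 [a] = [] := by simp [iterM, applyM, ha]
  rw [← Nat.sub_add_cancel hk, iterM_add, h1, iterM_nil] at haa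
  exact List.not_mem_nil haa

lemma exists_lt_mem_iterM_of_card_le [Fintype X] {x y : X} {k : ℕ}
    (hy : y ∈ iterM g k [x]) (hk : Fintype.card X ≤ k) : ∃ m < k, y ∈ iterM g m [x] := by
  have hchain : ∀ i : Fin (k + 1), ∃ b ∈ iterM g (k - i) [x], y ∈ iterM g i [b] := fun i =>
    (mem_iterM_add g).1 (by rwa [Nat.add_sub_cancel' i.is_le])
  choose b hxb hby using hchain
  -- `b i` is the letter `i` steps before `y` on a chain from `x`; a repeated letter cuts a loop.
  obtain ⟨i, j, hij, hb⟩ := Fintype.exists_ne_map_eq_of_card_lt b (by simpa using hk)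
  wlog hlt : i < j generalizing i j
  · exact this j i hij.symm hb.symm (lt_of_le_of_ne (not_lt.1 hlt) hij.symm)
  have hj := j.is_le
  rw [Fin.lt_def] at hlt
  exact ⟨i + (k - j), by omega, (mem_iterM_add g).2 ⟨b j, hxb j, hb ▸ hby i⟩⟩

lemma exists_mem_iterM_lt_card [Fintype X] {x y : X} {k : ℕ} (hy : y ∈ iterM g k [x]) :
    ∃ m < Fintype.card X, y ∈ iterM g m [x] := by
  classical
  have hex : ∃ m, y ∈ iterM g m [x] := ⟨k, hy⟩
  refine ⟨Nat.find hex, ?_, Nat.find_spec hex⟩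
  by_contra! hcard
  obtain ⟨m, hm, hmy⟩ := exists_lt_mem_iterM_of_card_le g (Nat.find_spec hex) hcard
  exact Nat.find_min hex hm hmy

lemma Primitive.length_le_length_iterM_card [Fintype X] {g : X → List X} (hg : Primitive g)
    (x y : X) : (g y).length ≤ (iterM g (Fintype.card X) [x]).length := by
  have hne := hg.ne_nil
  obtain ⟨k, -, hk⟩ := hg
  obtain ⟨m, hm, hmy⟩ := exists_mem_iterM_lt_card g (hk y x)
  calc (g y).length ≤ (iterM g (m + 1) [x]).length := by
        rw [iterM_succ']
        exact length_le_length_applyM_of_mem g hmy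
    _ ≤ (iterM g (Fintype.card X) [x]).length := monotone_length_iterM g hne [x] hm
end Iteration

theorem primitive_iter_card_length_ge_general {X : Type*} [Fintype X]
    (n : ℕ) (hn : n = Fintype.card X)
    (g : X → List X) (hg : Primitive g) :
    ∀ x : X, Mg g ≤ (iterM g n [x]).length := by
  intro x
  subst hn
  exact Finset.sup_le fun y _ => hg.length_le_length_iterM_card x y

/-- If `X` has `n ≥ 2` letters and `g` is primitive, then
`|g^n(x)| ≥ M_g` for every letter `x`. -/
theorem primitive_iter_card_length_ge {X : Type*} [Fintype X]
    (n : ℕ) (hn : n = Fintype.card X) (hn2 : 2 ≤ n)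
    (g : X → List X) (hg : Primitive g) :
    ∀ x : X, Mg g ≤ (iterM g n [x]).length :=
  primitive_iter_card_length_ge_general n hn g hg
end

section
/- Let X be an alphabet having n ≥ 2 letters and let g: X* → X* be a primitive morphism. If CYCLIC(g) ≠ ∅, then alph(g^{2n−2}(x)) = X for all letters x ∈ X. -/
open Filter Set

variable {X : Type*}

section Aux
variable {X : Type*}

lemma iterM_flat (g : X → List X) (k : ℕ) (w : List X) :
    iterM g k w = w.flatMap (powM g k) := by
  induction k with
  | zero =>
      show w = w.flatMap (powM g 0)
      have : powM g 0 = fun a : X => [a] := by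
        funext a; simp [powM, iterM]
      rw [this, List.flatMap_singleton']
  | succ k ih =>
      have h1 : iterM g (k+1) w = applyM g (iterM g k w) := by
        simp [iterM, Function.iterate_succ_apply']
      rw [h1, ih]
      simp only [applyM, List.flatMap_assoc]
      congr 1
      funext a
      simp [powM, iterM, Function.iterate_succ_apply', applyM]

lemma mem_iterM_trans {g : X → List X} {m k : ℕ} {x y z : X}
    (h1 : z ∈ iterM g m [x]) (h2 : y ∈ iterM g k [z]) :
    y ∈ iterM g (m + k) [x] := by
  have : iterM g (m + k) [x] = (iterM g m [x]).flatMap (powM g k) := by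
    rw [← iterM_flat]
    simp [iterM, Nat.add_comm m k, Function.iterate_add_apply]
  rw [this]
  exact List.mem_flatMap.2 ⟨z, h1, h2⟩

lemma iterM_decomp {g : X → List X} {m i : ℕ} {x y : X}
    (h : y ∈ iterM g m [x]) (hi : i ≤ m) :
    ∃ z, z ∈ iterM g i [x] ∧ y ∈ iterM g (m - i) [z] := by
  have hm : m = i + (m - i) := by omega
  have : iterM g m [x] = (iterM g i [x]).flatMap (powM g (m - i)) := by
    rw [← iterM_flat]
    rw [hm] at h ⊢
    simp [iterM, Nat.add_comm i (m - i), Function.iterate_add_apply]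
  rw [this] at h
  obtain ⟨z, hz, hy⟩ := List.mem_flatMap.1 h
  exact ⟨z, hz, hy⟩

lemma shorten [Fintype X] {n : ℕ} (hn : n = Fintype.card X)
    {g : X → List X} {m : ℕ} {x y : X} (h : y ∈ iterM g m [x]) :
    ∃ m' ≤ n - 1, y ∈ iterM g m' [x] := by
  induction m using Nat.strong_induction_on generalizing x with
  | _ m ih =>
    by_cases hm : m ≤ n - 1
    · exact ⟨m, hm, h⟩
    · have hmn : n ≤ m := by omega
      have hn1 : 1 ≤ n := by
        have := Fintype.card_pos_iff.2 ⟨x⟩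
        omega
      -- choose witnesses for each i ≤ n
      have hch : ∀ i : Fin (n + 1), ∃ z, z ∈ iterM g i.val [x] ∧ y ∈ iterM g (m - i.val) [z] := by
        intro i
        exact iterM_decomp h (by omega)
      choose f hf1 hf2 using hch
      have hcard : Fintype.card X < Fintype.card (Fin (n + 1)) := by simp [← hn]
      obtain ⟨i, j, hij, hfij⟩ := Fintype.exists_ne_map_eq_of_card_lt f hcard
      rcases Nat.lt_or_ge i.val j.val with hlt | hge
      · have hy' : y ∈ iterM g (i.val + (m - j.val)) [x] :=
          mem_iterM_trans (hf1 i) (hfij ▸ hf2 j)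
        exact ih _ (by omega) hy'
      · have hlt : j.val < i.val := by
          rcases Nat.lt_or_ge j.val i.val with h' | h'
          · exact h'
          · exact absurd (Fin.ext (by omega)) hij
        have hy' : y ∈ iterM g (j.val + (m - i.val)) [x] :=
          mem_iterM_trans (hf1 j) (hfij ▸ hf2 i)
        exact ih _ (by omega) hy'

lemma cyclic_self {g : X → List X} {z : X} (hz : z ∈ g z) (t : ℕ) :
    z ∈ iterM g t [z] := by
  induction t with
  | zero => simp [iterM]
  | succ t ih =>
      have : z ∈ iterM g 1 [z] := by simpa [iterM, applyM] using hz
      simpa using mem_iterM_trans ih this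

end Aux

/-- If `X` has `n ≥ 2` letters, `g` is primitive and
`CYCLIC(g) ≠ ∅`, then `alph(g^{2n-2}(x)) = X` for every letter `x`. -/
theorem primitive_cyclic_alph_eq {X : Type*} [Fintype X]
    (n : ℕ) (hn : n = Fintype.card X) (hn2 : 2 ≤ n)
    (g : X → List X) (hg : Primitive g)
    (hcyc : ∃ x : X, x ∈ g x) :
    ∀ x y : X, y ∈ iterM g (2 * n - 2) [x] := by
  obtain ⟨z, hz⟩ := hcyc
  obtain ⟨k, hk0, hk⟩ := hg
  intro x y
  obtain ⟨d1, hd1n, hd1⟩ := shorten hn (hk z x)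
  obtain ⟨d2, hd2n, hd2⟩ := shorten hn (hk y z)
  have hpad : z ∈ iterM g (2 * n - 2 - d1 - d2) [z] := cyclic_self hz _
  have h1 : z ∈ iterM g (d1 + (2 * n - 2 - d1 - d2)) [x] := mem_iterM_trans hd1 hpad
  have h2 : y ∈ iterM g (d1 + (2 * n - 2 - d1 - d2) + d2) [x] := mem_iterM_trans h1 hd2
  have : d1 + (2 * n - 2 - d1 - d2) + d2 = 2 * n - 2 := by omega
  rwa [this] at h2
end

section
/- Let g, h: X* → X* be morphisms and let x ∈ X be a letter such that g^ω(x) and h^ω(x) exist. If g^ω(x) = h^ω(x) and (gh)^ω(x) exists, then (gh)^ω(x) = g^ω(x). -/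
open Filter Set

variable {X : Type*}

lemma isPrefI_of_prefix {u v : List X} {s : ℕ → X} (huv : u <+: v)
    (hv : IsPrefI v s) : IsPrefI u s := by
  intro i hi
  obtain ⟨t, rfl⟩ := huv
  have hlt : i < (u ++ t).length := by simp; omega
  have := hv i hlt
  rwa [List.getElem_append_left hi] at this

lemma prefix_of_isPrefI {u v : List X} {s : ℕ → X} (hu : IsPrefI u s)
    (hv : IsPrefI v s) (hlen : u.length ≤ v.length) : u <+: v := by
  have : u = v.take u.length := by
    apply List.ext_getElem
    · simp [hlen]
    · intro i hi hi'
      rw [List.getElem_take, hv i (by omega), hu i hi]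
  rw [this]
  exact List.take_prefix _ _

lemma applyM_prefix (g : X → List X) {u v : List X} (huv : u <+: v) :
    applyM g u <+: applyM g v := by
  obtain ⟨t, rfl⟩ := huv
  exact ⟨applyM g t, by simp [applyM]⟩

lemma applyM_pres {g : X → List X} {x : X} {sg : ℕ → X} (hg : IsOmega g x sg)
    {w : List X} (hw : IsPrefI w sg) : IsPrefI (applyM g w) sg := by
  obtain ⟨i, hi⟩ := (hg.1.2.eventually_ge_atTop w.length).exists
  have hwpre : w <+: iterM g i [x] := prefix_of_isPrefI hw (hg.2 i) hi
  have h1 : applyM g w <+: iterM g (i + 1) [x] := by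
    have := applyM_prefix g hwpre
    rwa [show applyM g (iterM g i [x]) = iterM g (i + 1) [x] from
      (Function.iterate_succ_apply' (applyM g) i [x]).symm] at this
  exact isPrefI_of_prefix h1 (hg.2 (i + 1))

lemma applyM_compM (g h : X → List X) (w : List X) :
    applyM (compM g h) w = applyM g (applyM h w) := by
  induction w with
  | nil => rfl
  | cons a t ih => simp [applyM, compM] at *; rw [ih]

/-- If `g^ω(x) = h^ω(x)` and `(gh)^ω(x)` exists, then
`(gh)^ω(x) = g^ω(x)`. -/
theorem omega_comp_eq_of_omega_eq {X : Type*}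
    (g h : X → List X) (x : X) (sg sh sgh : ℕ → X)
    (hg : IsOmega g x sg) (hh : IsOmega h x sh)
    (hgh : IsOmega (compM g h) x sgh)
    (heq : sg = sh) :
    sgh = sg := by
  -- [x] is a prefix of sg
  have hx : IsPrefI [x] sg := by
    have : [x] <+: iterM g 1 [x] := by
      simpa [iterM, applyM] using hg.1.1
    exact isPrefI_of_prefix this (hg.2 1)
  -- every iterate of gh is a prefix of sg
  have key : ∀ i, IsPrefI (iterM (compM g h) i [x]) sg := by
    intro i
    induction i with
    | zero => simpa [iterM] using hx
    | succ n ih =>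
      have h1 : IsPrefI (applyM h (iterM (compM g h) n [x])) sg := by
        rw [heq] at ih ⊢
        exact applyM_pres hh ih
      have h2 := applyM_pres hg h1
      rw [← applyM_compM] at h2
      rwa [show iterM (compM g h) (n + 1) [x]
          = applyM (compM g h) (iterM (compM g h) n [x]) from
        Function.iterate_succ_apply' _ n [x]]
  funext n
  obtain ⟨i, hi⟩ := (hgh.1.2.eventually_ge_atTop (n + 1)).exists
  have hlt : n < (iterM (compM g h) i [x]).length := by omega
  rw [← hgh.2 i n hlt, key i n hlt]
end
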